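/- Let G be a finite group with normalized 3-cocycle ω, and define the Dijkgraaf-Witten triangle map A^ω_DW = Σ_{g₁,g₂,g₃∈G} ω(g₃g₂⁻¹, g₂g₁⁻¹, g₁)⁻¹ |g₂g₁⁻¹, g₃g₂⁻¹, g₃g₁⁻¹⟩⟨g₁,g₂,g₃| on (ℂG)^{⊗3}. Then (A^ω_DW)†·A^ω_DW = |G|·P^ω, where P^ω = (1/|G|)Σ_{g} V^ω(g) is the twisted symmetrizer. -/

import Mathlib

open scoped BigOperators
open Matrix

/-- The 3-cocycle condition for a `U(1)`-valued (unit-modulus) function. -/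
def IsCocycle {G : Type*} [Group G] (ω : G → G → G → ℂ) : Prop :=
  ∀ a b c d : G, ω a b c * ω a (b * c) d * ω b c d = ω (a * b) c d * ω a b (c * d)

/-- `ω` is normalized: it equals 1 whenever any argument is the identity. -/
def IsNormalized {G : Type*} [Group G] (ω : G → G → G → ℂ) : Prop :=
  ∀ a b c : G, a = 1 ∨ b = 1 ∨ c = 1 → ω a b c = 1

/-- `ω` takes values on the unit circle. -/
def IsUnitary {G : Type*} [Group G] (ω : G → G → G → ℂ) : Prop :=
  ∀ a b c : G, ‖ω a b c‖ = 1

/-- The twisted symmetry operator `V^ω(g)` on `(ℂG)^{⊗3}`, written as a matrix with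
respect to the group-element basis of triples `(α,β,γ)`.  Its only nonzero entries are
`⟨αg⁻¹, βg⁻¹, γg⁻¹| V^ω(g) |α,β,γ⟩ = ω(γα⁻¹, αg⁻¹, g) / (ω(βα⁻¹, αg⁻¹, g)·ω(γβ⁻¹, βg⁻¹, g))`. -/
noncomputable def Vmat {G : Type*} [Group G] [DecidableEq G]
    (ω : G → G → G → ℂ) (g : G) : Matrix (G × G × G) (G × G × G) ℂ :=
  fun r c =>
    if r = (c.1 * g⁻¹, c.2.1 * g⁻¹, c.2.2 * g⁻¹) then
      ω (c.2.2 * c.1⁻¹) (c.1 * g⁻¹) g /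
        (ω (c.2.1 * c.1⁻¹) (c.1 * g⁻¹) g * ω (c.2.2 * c.2.1⁻¹) (c.2.1 * g⁻¹) g)
    else 0

/-- The twisted symmetrizer `P^ω = (1/|G|) Σ_g V^ω(g)`. -/
noncomputable def Pmat (G : Type*) [Group G] [Fintype G] [DecidableEq G]
    (ω : G → G → G → ℂ) : Matrix (G × G × G) (G × G × G) ℂ :=
  (Fintype.card G : ℂ)⁻¹ • ∑ g : G, Vmat ω g

/-- The Dijkgraaf–Witten triangle map
`A^ω_DW = Σ ω(g₃g₂⁻¹, g₂g₁⁻¹, g₁)⁻¹ |g₂g₁⁻¹, g₃g₂⁻¹, g₃g₁⁻¹⟩⟨g₁,g₂,g₃|`. -/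
noncomputable def Adw {G : Type*} [Group G] [DecidableEq G]
    (ω : G → G → G → ℂ) : Matrix (G × G × G) (G × G × G) ℂ :=
  fun r c =>
    if r = (c.2.1 * c.1⁻¹, c.2.2 * c.2.1⁻¹, c.2.2 * c.1⁻¹) then
      (ω (c.2.2 * c.2.1⁻¹) (c.2.1 * c.1⁻¹) c.1)⁻¹
    else 0

/-
`A^ω_DW` sends each basis triple to a single basis triple, its triangle of edges
`(g₂g₁⁻¹, g₃g₂⁻¹, g₃g₁⁻¹)`, so `(A^ω_DW)†A^ω_DW` is supported on pairs of triples with the same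
edges. Those are exactly the pairs related by a diagonal right translation by some `g`, which is
also the support of `V^ω(g)`. On this support the entry of `(A^ω_DW)†A^ω_DW` is a quotient of two
values of `ω`, and the cocycle identity turns it into the entry of `V^ω(g)`.
-/

namespace Matrix

variable {m n α : Type*} [Fintype m] [DecidableEq m] [NonUnitalNonAssocSemiring α] [StarRing α]

theorem conjTranspose_mul_self_apply_of_eq_ite {M : Matrix m n α} {f : n → m} {a : n → α}
    (hM : ∀ i j, M i j = if i = f j then a j else 0) (i j : n) :
    (Mᴴ * M) i j = if f i = f j then star (a i) * a j else 0 := by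
  simp only [mul_apply, conjTranspose_apply, hM, apply_ite star, star_zero, ite_mul, mul_ite,
    zero_mul, mul_zero, Finset.sum_ite_eq', Finset.mem_univ, if_true]
  exact if_congr eq_comm rfl rfl

end Matrix

section Cocycle

variable {G : Type*} [Group G] {ω : G → G → G → ℂ}

theorem IsUnitary.ne_zero (hu : IsUnitary ω) (a b c : G) : ω a b c ≠ 0 :=
  norm_ne_zero_iff.mp (by rw [hu]; exact one_ne_zero)

theorem IsUnitary.star_inv (hu : IsUnitary ω) (a b c : G) : star (ω a b c)⁻¹ = ω a b c := by
  rw [RCLike.inv_eq_conj (hu a b c)]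
  exact star_star _

theorem IsCocycle.div_eq_div (hω : IsCocycle ω) (h0 : ∀ a b c, ω a b c ≠ 0) (a b x g : G) :
    ω a b x / ω a b (x * g) = ω (a * b) x g / (ω b x g * ω a (b * x) g) := by
  rw [div_eq_div_iff (h0 _ _ _) (mul_ne_zero (h0 _ _ _) (h0 _ _ _))]
  linear_combination hω a b x g

end Cocycle

namespace DijkgraafWitten

variable {G : Type*} [Group G]

def shift (c : G × G × G) (g : G) : G × G × G := (c.1 * g⁻¹, c.2.1 * g⁻¹, c.2.2 * g⁻¹)

def edges (c : G × G × G) : G × G × G := (c.2.1 * c.1⁻¹, c.2.2 * c.2.1⁻¹, c.2.2 * c.1⁻¹)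

@[simp]
theorem edges_shift (c : G × G × G) (g : G) : edges (shift c g) = edges c := by
  simp only [edges, shift, Prod.mk.injEq]
  refine ⟨by group, by group, by group⟩

theorem eq_shift_of_edges_eq {r c : G × G × G} (h : edges r = edges c) :
    r = shift c (r.1⁻¹ * c.1) := by
  obtain ⟨r₁, r₂, r₃⟩ := r
  obtain ⟨c₁, c₂, c₃⟩ := c
  simp only [edges, shift, Prod.mk.injEq] at h ⊢
  obtain ⟨h₂₁, -, h₃₁⟩ := h
  refine ⟨by group, ?_, ?_⟩
  · rw [_root_.mul_inv_rev, inv_inv, ← mul_assoc, ← h₂₁, inv_mul_cancel_right]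
  · rw [_root_.mul_inv_rev, inv_inv, ← mul_assoc, ← h₃₁, inv_mul_cancel_right]

theorem edges_eq_edges_iff {r c : G × G × G} :
    edges r = edges c ↔ r = shift c (r.1⁻¹ * c.1) :=
  ⟨eq_shift_of_edges_eq, fun h => by rw [h, edges_shift]⟩

variable [DecidableEq G]

theorem Adw_apply (ω : G → G → G → ℂ) (r c : G × G × G) :
    Adw ω r c = if r = edges c then (ω (edges c).2.1 (edges c).1 c.1)⁻¹ else 0 :=
  rfl

theorem Vmat_apply (ω : G → G → G → ℂ) (g : G) (r c : G × G × G) :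
    Vmat ω g r c = if r = shift c g then
      ω (c.2.2 * c.1⁻¹) (c.1 * g⁻¹) g /
        (ω (c.2.1 * c.1⁻¹) (c.1 * g⁻¹) g * ω (c.2.2 * c.2.1⁻¹) (c.2.1 * g⁻¹) g)
    else 0 :=
  rfl

variable [Fintype G]

theorem sum_Vmat_apply (ω : G → G → G → ℂ) (r c : G × G × G) :
    (∑ g, Vmat ω g) r c = Vmat ω (r.1⁻¹ * c.1) r c := by
  rw [Matrix.sum_apply, Fintype.sum_eq_single]
  intro g hg
  rw [Vmat_apply, if_neg]
  rintro rfl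
  exact hg (by simp [shift])

theorem card_smul_Pmat (ω : G → G → G → ℂ) :
    (Fintype.card G : ℂ) • Pmat G ω = ∑ g, Vmat ω g := by
  rw [Pmat, smul_smul, mul_inv_cancel₀ (Nat.cast_ne_zero.mpr Fintype.card_ne_zero), one_smul]

end DijkgraafWitten

theorem Adw_isometry_general {G : Type*} [Group G] [Fintype G] [DecidableEq G]
    (ω : G → G → G → ℂ) (hu : IsUnitary ω) (hω : IsCocycle ω) :
    (Adw ω)ᴴ * Adw ω = (Fintype.card G : ℂ) • Pmat G ω := by
  open DijkgraafWitten in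
  ext r c
  rw [Matrix.conjTranspose_mul_self_apply_of_eq_ite (Adw_apply ω), card_smul_Pmat, sum_Vmat_apply,
    Vmat_apply]
  simp only [edges_eq_edges_iff]
  split_ifs with h
  · generalize r.1⁻¹ * c.1 = g at h ⊢
    subst h
    rw [edges_shift, hu.star_inv, ← div_eq_mul_inv]
    obtain ⟨c₁, c₂, c₃⟩ := c
    simpa only [edges, shift, mul_assoc, inv_mul_cancel_left, inv_mul_cancel, mul_one] using
      hω.div_eq_div hu.ne_zero (c₃ * c₂⁻¹) (c₂ * c₁⁻¹) (c₁ * g⁻¹) g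
  · rfl

theorem Adw_isometry {G : Type*} [Group G] [Fintype G] [DecidableEq G]
    (ω : G → G → G → ℂ) (hu : IsUnitary ω) (hω : IsCocycle ω) (hn : IsNormalized ω) :
    (Adw ω)ᴴ * Adw ω = (Fintype.card G : ℂ) • Pmat G ω :=
  Adw_isometry_general ω hu hω
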